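/- arXiv:1211.4142 — 2 statements merged into one kernel-verified Lean document; each statement's English description precedes it below -/
import Mathlib

section
/- Minimum Deviation Trend Line theorem: Let A ∈ ℝ^{m×n}, μ = Ae/n, and C = A − μeᵀ with principal left singular vector u₁ and largest singular value σ₁. Then for all unit vectors x ∈ ℝ^m and all p ∈ ℝ^m, ‖(I − xxᵀ)(A − peᵀ)‖_F² ≥ ‖C‖_F² − σ₁², with equality attained at x = u₁, p = μ. -/
/-!
Write `P = I - xxᵀ`. Since the rows of `C` sum to zero, `A - peᵀ = C + (μ - p)eᵀ` and
`P(A - peᵀ) = PC + (P(μ - p))eᵀ` with `PC e = 0`, so the two summands are Frobenius-orthogonal and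
`f(x, p) ≥ ‖PC‖_F² = ‖C‖_F² - xᵀCCᵀx`. The Rayleigh quotient `xᵀCCᵀx` of a unit vector is at most
the largest eigenvalue `σ₁²` of `CCᵀ`, and both inequalities are equalities at `x = u₁`, `p = μ`.
-/

namespace Matrix

variable {m n : Type*}

lemma dotProduct_self_eq_sum_sq [Fintype m] (v : m → ℝ) : v ⬝ᵥ v = ∑ i, v i ^ 2 := by
  simp only [dotProduct, sq]

lemma dotProduct_mulVec_mul_transpose_self [Fintype m] [Fintype n] (C : Matrix m n ℝ)
    (x : m → ℝ) :
    x ⬝ᵥ (C * Cᵀ) *ᵥ x = (x ᵥ* C) ⬝ᵥ (x ᵥ* C) := by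
  rw [← mulVec_mulVec, dotProduct_mulVec, mulVec_transpose]

lemma dotProduct_mulVec_le_of_eigenvalue_le [Fintype m] [DecidableEq m] {M : Matrix m m ℝ}
    (hM : M.IsHermitian) {c : ℝ}
    (hc : ∀ lam : ℝ, (∃ v : m → ℝ, v ≠ 0 ∧ M *ᵥ v = lam • v) → lam ≤ c) (x : m → ℝ) :
    x ⬝ᵥ M *ᵥ x ≤ c * (x ⬝ᵥ x) := by
  have hN : (c • 1 - M).IsHermitian := (isHermitian_one.smul (IsSelfAdjoint.all c)).sub hM
  have hN_eig : ∀ i, 0 ≤ hN.eigenvalues i := by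
    intro i
    set v : m → ℝ := ⇑(hN.eigenvectorBasis i)
    have hv : v ≠ 0 := fun h =>
      hN.eigenvectorBasis.orthonormal.ne_zero i (by ext k; exact congrFun h k)
    have hMv : M *ᵥ v = (c - hN.eigenvalues i) • v := by
      have := hN.mulVec_eigenvectorBasis i
      rw [sub_mulVec, smul_mulVec, one_mulVec] at this
      rw [sub_smul, ← this, sub_sub_cancel]
    linarith [hc _ ⟨v, hv, hMv⟩]
  have := (hN.posSemidef_iff_eigenvalues_nonneg.mpr hN_eig).dotProduct_mulVec_nonneg x
  rw [star_trivial, sub_mulVec, smul_mulVec, one_mulVec, dotProduct_sub, dotProduct_smul,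
    smul_eq_mul] at this
  linarith

lemma sum_sq_add_vecMulVec_of_mulVec_eq_zero [Fintype m] [Fintype n] (C : Matrix m n ℝ)
    (d : m → ℝ) {e : n → ℝ} (hCe : C *ᵥ e = 0) :
    ∑ i, ∑ j, (C + vecMulVec d e) i j ^ 2
      = ∑ i, ∑ j, C i j ^ 2 + (∑ i, d i ^ 2) * ∑ j, e j ^ 2 := by
  have hcross : ∀ i, ∑ j, C i j * e j = 0 := fun i => congrFun hCe i
  simp only [add_apply, vecMulVec_apply, add_sq, Finset.sum_add_distrib]
  have : ∀ i, ∑ j, 2 * C i j * (d i * e j) = 0 := fun i => by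
    simp_rw [show ∀ j, 2 * C i j * (d i * e j) = 2 * d i * (C i j * e j) from fun j => by ring]
    rw [← Finset.mul_sum, hcross, mul_zero]
  simp only [this, Finset.sum_const_zero, add_zero, mul_pow, ← Finset.mul_sum, ← Finset.sum_mul]

lemma one_sub_vecMulVec_mul_apply [Fintype m] [DecidableEq m] (x : m → ℝ) (B : Matrix m n ℝ)
    (i : m) (j : n) :
    (((1 : Matrix m m ℝ) - vecMulVec x x) * B) i j = B i j - x i * (x ᵥ* B) j := by
  rw [Matrix.sub_mul, Matrix.one_mul, vecMulVec_mul, sub_apply, vecMulVec_apply]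

lemma sum_sq_one_sub_vecMulVec_mul [Fintype m] [Fintype n] [DecidableEq m] {x : m → ℝ}
    (hx : x ⬝ᵥ x = 1) (B : Matrix m n ℝ) :
    ∑ i, ∑ j, (((1 : Matrix m m ℝ) - vecMulVec x x) * B) i j ^ 2
      = ∑ i, ∑ j, B i j ^ 2 - (x ᵥ* B) ⬝ᵥ (x ᵥ* B) := by
  have hcol : ∀ j, ∑ i, (B i j - x i * (x ᵥ* B) j) ^ 2 = ∑ i, B i j ^ 2 - (x ᵥ* B) j ^ 2 := by
    intro j
    set y := (x ᵥ* B) j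
    have hy : ∑ i, x i * B i j = y := rfl
    calc ∑ i, (B i j - x i * y) ^ 2
          = ∑ i, (B i j ^ 2 - 2 * y * (x i * B i j) + y ^ 2 * x i ^ 2) :=
          Finset.sum_congr rfl fun i _ => by ring
      _ = ∑ i, B i j ^ 2 - y ^ 2 := by
          rw [Finset.sum_add_distrib, Finset.sum_sub_distrib, ← Finset.mul_sum, ← Finset.mul_sum,
            hy, ← dotProduct_self_eq_sum_sq x, hx]
          ring
  rw [Finset.sum_comm]
  simp_rw [one_sub_vecMulVec_mul_apply, hcol]
  rw [Finset.sum_sub_distrib, Finset.sum_comm, dotProduct_self_eq_sum_sq]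

lemma sub_vecMulVec_mean_mulVec_one [Fintype n] [Nonempty n] (A : Matrix m n ℝ) :
    (A - vecMulVec ((Fintype.card n : ℝ)⁻¹ • (A *ᵥ 1)) 1) *ᵥ 1 = 0 := by
  rw [sub_mulVec, vecMulVec_mulVec, one_dotProduct_one, op_smul_eq_smul, smul_smul,
    mul_inv_cancel₀ (Nat.cast_ne_zero.mpr Fintype.card_ne_zero), one_smul, sub_self]

end Matrix

open Matrix

theorem minimum_deviation_trend_line_general
    {m n : ℕ} (hn : 0 < n) (A : Matrix (Fin m) (Fin n) ℝ)
    (e : Fin n → ℝ) (he : e = fun _ => (1 : ℝ))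
    (μ : Fin m → ℝ) (hμ : μ = (n : ℝ)⁻¹ • (A *ᵥ e))
    (C : Matrix (Fin m) (Fin n) ℝ) (hC : C = A - vecMulVec μ e)
    (σ₁ : ℝ)
    (u₁ : Fin m → ℝ) (hu₁ : ∑ i, (u₁ i) ^ 2 = 1)
    (heig : (C * Cᵀ) *ᵥ u₁ = (σ₁ ^ 2) • u₁)
    (hmax : ∀ lam : ℝ, (∃ v : Fin m → ℝ, v ≠ 0 ∧ (C * Cᵀ) *ᵥ v = lam • v) → lam ≤ σ₁ ^ 2) :
    (∀ (x : Fin m → ℝ), (∑ i, (x i) ^ 2 = 1) → ∀ p : Fin m → ℝ,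
        (∑ i, ∑ j, (C i j) ^ 2) - σ₁ ^ 2
          ≤ ∑ i, ∑ j, ((((1 : Matrix (Fin m) (Fin m) ℝ) - vecMulVec x x) * (A - vecMulVec p e)) i j) ^ 2) ∧
      ∑ i, ∑ j, ((((1 : Matrix (Fin m) (Fin m) ℝ) - vecMulVec u₁ u₁) * (A - vecMulVec μ e)) i j) ^ 2
        = (∑ i, ∑ j, (C i j) ^ 2) - σ₁ ^ 2 := by
  have := Fin.pos_iff_nonempty.mp hn
  have hCe : C *ᵥ e = 0 := by
    have h := sub_vecMulVec_mean_mulVec_one A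
    rw [Fintype.card_fin] at h
    subst he
    rw [hC, hμ]
    exact h
  have hshift : ∀ p, A - vecMulVec p e = C + vecMulVec (μ - p) e := fun p => by
    rw [hC, sub_vecMulVec]
    abel
  have hunit : ∀ x : Fin m → ℝ, ∑ i, x i ^ 2 = 1 → x ⬝ᵥ x = 1 := fun x hx =>
    (dotProduct_self_eq_sum_sq x).trans hx
  refine ⟨fun x hx p => ?_, ?_⟩
  · set P := (1 : Matrix (Fin m) (Fin m) ℝ) - vecMulVec x x
    have hPCe : (P * C) *ᵥ e = 0 := by rw [← mulVec_mulVec, hCe, mulVec_zero]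
    have hray := dotProduct_mulVec_le_of_eigenvalue_le
      (by simpa using isHermitian_mul_conjTranspose_self C) hmax x
    rw [dotProduct_mulVec_mul_transpose_self, hunit x hx, mul_one] at hray
    calc ∑ i, ∑ j, C i j ^ 2 - σ₁ ^ 2
          ≤ ∑ i, ∑ j, C i j ^ 2 - (x ᵥ* C) ⬝ᵥ (x ᵥ* C) := by linarith
      _ = ∑ i, ∑ j, (P * C) i j ^ 2 := (sum_sq_one_sub_vecMulVec_mul (hunit x hx) C).symm
      _ ≤ ∑ i, ∑ j, (P * C + vecMulVec (P *ᵥ (μ - p)) e) i j ^ 2 := by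
          rw [sum_sq_add_vecMulVec_of_mulVec_eq_zero _ _ hPCe]
          exact le_add_of_nonneg_right (by positivity)
      _ = _ := by rw [hshift, Matrix.mul_add, mul_vecMulVec]
  · rw [← hC, sum_sq_one_sub_vecMulVec_mul (hunit u₁ hu₁), ← dotProduct_mulVec_mul_transpose_self,
      heig, dotProduct_smul, hunit u₁ hu₁, smul_eq_mul, mul_one]

/-- Minimum Deviation Trend Line: For all unit x and all p,
‖(I − xxᵀ)(A − peᵀ)‖_F² ≥ ‖C‖_F² − σ₁², with equality at x = u₁, p = μ. -/
theorem minimum_deviation_trend_line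
    {m n : ℕ} (hn : 0 < n) (A : Matrix (Fin m) (Fin n) ℝ)
    (e : Fin n → ℝ) (he : e = fun _ => (1 : ℝ))
    (μ : Fin m → ℝ) (hμ : μ = (n : ℝ)⁻¹ • (A *ᵥ e))
    (C : Matrix (Fin m) (Fin n) ℝ) (hC : C = A - vecMulVec μ e)
    (σ₁ : ℝ) (hσ₁ : 0 ≤ σ₁)
    (u₁ : Fin m → ℝ) (hu₁ : ∑ i, (u₁ i) ^ 2 = 1)
    (heig : (C * Cᵀ) *ᵥ u₁ = (σ₁ ^ 2) • u₁)
    (hmax : ∀ lam : ℝ, (∃ v : Fin m → ℝ, v ≠ 0 ∧ (C * Cᵀ) *ᵥ v = lam • v) → lam ≤ σ₁ ^ 2) :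
    (∀ (x : Fin m → ℝ), (∑ i, (x i) ^ 2 = 1) → ∀ p : Fin m → ℝ,
        (∑ i, ∑ j, (C i j) ^ 2) - σ₁ ^ 2
          ≤ ∑ i, ∑ j, ((((1 : Matrix (Fin m) (Fin m) ℝ) - vecMulVec x x) * (A - vecMulVec p e)) i j) ^ 2) ∧
      ∑ i, ∑ j, ((((1 : Matrix (Fin m) (Fin m) ℝ) - vecMulVec u₁ u₁) * (A - vecMulVec μ e)) i j) ^ 2
        = (∑ i, ∑ j, (C i j) ^ 2) - σ₁ ^ 2 :=
  minimum_deviation_trend_line_general hn A e he μ hμ C hC σ₁ u₁ hu₁ heig hmax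
end

section
/- The variance of the data projected onto the line {αx + p} equals ‖Cᵀx‖₂²/n: that is, ‖Â − μ_Âeᵀ‖_F²/n = ‖Cᵀx‖₂²/n, where Â = (I − xxᵀ)peᵀ + xxᵀA, μ_Â = Âe/n, and C = A − (Ae/n)eᵀ. In particular, the directional variance is independent of p. -/
/-!
Subtracting row means is linear, commutes with left multiplication, and kills `p eᵀ`, whose
rows are constant; so it removes the `p`-part of `Â`. Hence `Â - μ_Â eᵀ = xxᵀ C`, which is
the rank-one matrix `x (Cᵀ x)ᵀ`, and its squared Frobenius norm is `‖x‖² ‖Cᵀ x‖² = ‖Cᵀ x‖²`.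
-/

open Matrix BigOperators

namespace Matrix

variable {ι ι' R : Type*} {n : ℕ}

def rowCenter [Field R] (M : Matrix ι (Fin n) R) : Matrix ι (Fin n) R :=
  M - vecMulVec ((n : R)⁻¹ • (M *ᵥ 1)) 1

section Field

variable [Field R]

theorem rowCenter_add (M N : Matrix ι (Fin n) R) :
    rowCenter (M + N) = rowCenter M + rowCenter N := by
  simp only [rowCenter, add_mulVec, smul_add, add_vecMulVec]
  abel

theorem rowCenter_mul_left [Fintype ι] (B : Matrix ι' ι R) (M : Matrix ι (Fin n) R) :
    rowCenter (B * M) = B * rowCenter M := by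
  simp only [rowCenter, Matrix.mul_sub, mul_vecMulVec, mulVec_smul, mulVec_mulVec]

theorem rowCenter_vecMulVec_one [CharZero R] (p : ι → R) :
    rowCenter (vecMulVec p (1 : Fin n → R)) = 0 := by
  ext i j
  have hn : (n : R) ≠ 0 := Nat.cast_ne_zero.mpr (Fin.pos j).ne'
  simp [rowCenter, mulVec, dotProduct, hn]

end Field

theorem sum_sum_vecMulVec_sq [Fintype ι] [Fintype ι'] [CommSemiring R] (x : ι → R) (y : ι' → R) :
    ∑ i, ∑ j, vecMulVec x y i j ^ 2 = (∑ i, x i ^ 2) * ∑ j, y j ^ 2 := by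
  simp only [vecMulVec_apply, mul_pow, Finset.sum_mul_sum]

end Matrix

theorem directional_variance_eq_general
    {m n : ℕ} (A : Matrix (Fin m) (Fin n) ℝ)
    (x p : Fin m → ℝ) (hx : ∑ i, (x i) ^ 2 = 1)
    (e : Fin n → ℝ) (he : e = fun _ => (1 : ℝ))
    (μ : Fin m → ℝ) (hμ : μ = (n : ℝ)⁻¹ • (A *ᵥ e))
    (C : Matrix (Fin m) (Fin n) ℝ) (hC : C = A - vecMulVec μ e)
    (Ahat : Matrix (Fin m) (Fin n) ℝ)
    (hAhat : Ahat = (1 - vecMulVec x x) * vecMulVec p e + vecMulVec x x * A)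
    (μAhat : Fin m → ℝ) (hμAhat : μAhat = (n : ℝ)⁻¹ • (Ahat *ᵥ e)) :
    (∑ i, ∑ j, ((Ahat - vecMulVec μAhat e) i j) ^ 2) / n
      = (∑ j, ((Cᵀ *ᵥ x) j) ^ 2) / n := by
  replace he : e = 1 := he
  subst he
  have hC' : C = rowCenter A := by rw [hC, hμ, rowCenter]
  have hcentered : Ahat - vecMulVec μAhat 1 = vecMulVec x (Cᵀ *ᵥ x) :=
    calc Ahat - vecMulVec μAhat 1 = rowCenter Ahat := by rw [hμAhat, rowCenter]
      _ = vecMulVec x x * C := by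
        rw [hAhat, rowCenter_add, rowCenter_mul_left, rowCenter_mul_left,
          rowCenter_vecMulVec_one, Matrix.mul_zero, zero_add, hC']
      _ = vecMulVec x (Cᵀ *ᵥ x) := by rw [vecMulVec_mul, mulVec_transpose]
  rw [hcentered, sum_sum_vecMulVec_sq, hx, one_mul]

/-- The directional variance ‖Â − μ_Âeᵀ‖_F²/n equals ‖Cᵀx‖₂²/n
(independent of p). -/
theorem directional_variance_eq
    {m n : ℕ} (hn : 0 < n) (A : Matrix (Fin m) (Fin n) ℝ)
    (x p : Fin m → ℝ) (hx : ∑ i, (x i) ^ 2 = 1)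
    (e : Fin n → ℝ) (he : e = fun _ => (1 : ℝ))
    (μ : Fin m → ℝ) (hμ : μ = (n : ℝ)⁻¹ • (A *ᵥ e))
    (C : Matrix (Fin m) (Fin n) ℝ) (hC : C = A - vecMulVec μ e)
    (Ahat : Matrix (Fin m) (Fin n) ℝ)
    (hAhat : Ahat = (1 - vecMulVec x x) * vecMulVec p e + vecMulVec x x * A)
    (μAhat : Fin m → ℝ) (hμAhat : μAhat = (n : ℝ)⁻¹ • (Ahat *ᵥ e)) :
    (∑ i, ∑ j, ((Ahat - vecMulVec μAhat e) i j) ^ 2) / n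
      = (∑ j, ((Cᵀ *ᵥ x) j) ^ 2) / n :=
  directional_variance_eq_general A x p hx e he μ hμ C hC Ahat hAhat μAhat hμAhat
end
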